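/- arXiv:2002.03291 — 2 statements merged into one kernel-verified Lean document; each statement's English description precedes it below -/
import Mathlib

section
/- Let p be a prime, N a positive integer, F ∈ ℤ_p[[x]] convergent on ℤ_p, and M such that F ≡ F_M (mod p^N), where F_M is the truncation of F in degree M. Suppose R ⊂ ℤ/p^Nℤ is a set of residues such that for each r ∈ R, F_M(r) ≡ 0 (mod p^N) and F_M'(r)² ≢ 0 (mod p^N), and such that distinct r, r' ∈ R satisfy r ≢ r' (mod p^{N − v_p(F_M'(r))}). Then the elements of R lift to pairwise distinct simple roots of F in ℤ_p, one root for each r ∈ R. -/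
/-- Evaluation of a (coefficientwise convergent) power series over `ℤ_p` at a point. -/
noncomputable def evalPS (p : ℕ) [Fact p.Prime] (F : PowerSeries ℤ_[p]) (x : ℤ_[p]) : ℤ_[p] :=
  ∑' n : ℕ, PowerSeries.coeff (R := ℤ_[p]) n F * x ^ n

/-- Formal derivative of a power series over `ℤ_p`. -/
noncomputable def derivPS (p : ℕ) [Fact p.Prime] (F : PowerSeries ℤ_[p]) : PowerSeries ℤ_[p] :=
  PowerSeries.mk fun n => (n + 1 : ℤ_[p]) * PowerSeries.coeff (R := ℤ_[p]) (n + 1) F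

open Filter Finset Polynomial

namespace Stmt5Aux

variable {p : ℕ} [Fact p.Prime]

lemma dvd_iff_norm_le (n : ℕ) (x : ℤ_[p]) :
    (p : ℤ_[p]) ^ n ∣ x ↔ ‖x‖ ≤ (p : ℝ) ^ (-n : ℤ) := by
  rw [PadicInt.norm_le_pow_iff_mem_span_pow, Ideal.mem_span_singleton]

lemma norm_le_of_dvd {x y : ℤ_[p]} (h : x ∣ y) : ‖y‖ ≤ ‖x‖ := by
  obtain ⟨c, rfl⟩ := h
  rw [norm_mul]
  exact mul_le_of_le_one_right (norm_nonneg _) (PadicInt.norm_le_one _)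

lemma trunc_eval (F : PowerSeries ℤ_[p]) (n : ℕ) (x : ℤ_[p]) :
    (F.trunc n).eval x = ∑ i ∈ range n, PowerSeries.coeff (R := ℤ_[p]) i F * x ^ i := by
  simpa using PowerSeries.eval₂_trunc_eq_sum_range x (RingHom.id ℤ_[p]) n F

lemma summable_aux {g : ℕ → ℤ_[p]} (hg : Tendsto (fun n => ‖g n‖) atTop (nhds 0)) (x : ℤ_[p]) :
    Summable (fun n => g n * x ^ n) := by
  apply NonarchimedeanAddGroup.summable_of_tendsto_cofinite_zero
  rw [tendsto_zero_iff_norm_tendsto_zero, Nat.cofinite_eq_atTop]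
  refine squeeze_zero (fun n => norm_nonneg _) (fun n => ?_) hg
  rw [norm_mul]
  exact mul_le_of_le_one_right (norm_nonneg _) (PadicInt.norm_le_one _)

lemma norm_add_eq_left {x y : ℤ_[p]} (h : ‖y‖ < ‖x‖) : ‖x + y‖ = ‖x‖ := by
  rw [IsUltrametricDist.norm_add_eq_max_of_norm_ne_norm (ne_of_gt h)]
  exact max_eq_left h.le

/-- Tail bound for `evalPS` against a truncation. -/
lemma evalPS_sub_trunc {F : PowerSeries ℤ_[p]}
    (hconv : Tendsto (fun n => ‖PowerSeries.coeff (R := ℤ_[p]) n F‖) atTop (nhds 0))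
    (m : ℕ) (x : ℤ_[p]) {ε : ℝ} (hε : 0 ≤ ε)
    (h : ∀ i, m ≤ i → ‖PowerSeries.coeff (R := ℤ_[p]) i F‖ ≤ ε) :
    ‖evalPS p F x - (F.trunc m).eval x‖ ≤ ε := by
  have hs := summable_aux hconv x
  rw [trunc_eval, evalPS, ← Summable.sum_add_tsum_nat_add m hs, add_sub_cancel_left]
  refine IsUltrametricDist.norm_tsum_le_of_forall_le_of_nonneg hε (fun i => ?_)
  calc ‖PowerSeries.coeff (R := ℤ_[p]) (i + m) F * x ^ (i + m)‖
      ≤ ‖PowerSeries.coeff (R := ℤ_[p]) (i + m) F‖ := by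
        rw [norm_mul]
        exact mul_le_of_le_one_right (norm_nonneg _) (PadicInt.norm_le_one _)
    _ ≤ ε := h _ le_add_self

/-- The derivative of the truncation is a truncation of `derivPS`. -/
lemma trunc_derivative (F : PowerSeries ℤ_[p]) (M : ℕ) :
    derivative (F.trunc (M + 1)) = PowerSeries.trunc M (derivPS p F) := by
  ext n
  rw [Polynomial.coeff_derivative, PowerSeries.coeff_trunc, PowerSeries.coeff_trunc]
  simp only [derivPS, PowerSeries.coeff_mk]
  split_ifs with h1 h2
  · ring

  · omega
  · omega
  · simp

lemma derivPS_conv {F : PowerSeries ℤ_[p]}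
    (hconv : Tendsto (fun n => ‖PowerSeries.coeff (R := ℤ_[p]) n F‖) atTop (nhds 0)) :
    Tendsto (fun n => ‖PowerSeries.coeff (R := ℤ_[p]) n (derivPS p F)‖) atTop (nhds 0) := by
  refine squeeze_zero (fun n => norm_nonneg _) (fun n => ?_)
    (hconv.comp (tendsto_add_atTop_nat 1))
  simp only [derivPS, PowerSeries.coeff_mk, Function.comp]
  rw [norm_mul]
  exact mul_le_of_le_one_left (norm_nonneg _) (PadicInt.norm_le_one _)

/-- Quantitative Newton estimate near a root. -/
lemma newton_quant (g : Polynomial ℤ_[p]) {z w : ℤ_[p]} (h0 : g.eval z = 0)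
    (hlt : ‖w - z‖ < ‖g.derivative.eval z‖) :
    ‖g.eval w‖ = ‖g.derivative.eval z‖ * ‖w - z‖ := by
  rcases eq_or_ne w z with rfl | hwz
  · simp [h0]
  obtain ⟨k, hk⟩ := g.binomExpansion z (w - z)
  have hzw : z + (w - z) = w := by ring
  rw [hzw, h0, zero_add] at hk
  have hpos : 0 < ‖w - z‖ := by
    rw [norm_pos_iff]
    exact sub_ne_zero.mpr hwz
  have hlt2 : ‖k * (w - z) ^ 2‖ < ‖g.derivative.eval z * (w - z)‖ := by
    rw [norm_mul, norm_mul, norm_pow]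
    have h1 : ‖k‖ * ‖w - z‖ ^ 2 ≤ ‖w - z‖ ^ 2 :=
      mul_le_of_le_one_left (by positivity) (PadicInt.norm_le_one k)
    have h2 : ‖w - z‖ ^ 2 < ‖g.derivative.eval z‖ * ‖w - z‖ := by
      rw [sq]
      exact mul_lt_mul_of_pos_right hlt hpos
    exact lt_of_le_of_lt h1 h2
  rw [hk, norm_add_eq_left hlt2, norm_mul]

/-- Difference of two truncations, evaluated, is bounded by the sup of the coefficients. -/
lemma trunc_diff_norm_le {F : PowerSeries ℤ_[p]} {c : ℝ} (hc : 0 ≤ c) {m : ℕ} (n : ℕ)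
    (hmn : m ≤ n) (h : ∀ i, m ≤ i → ‖PowerSeries.coeff (R := ℤ_[p]) i F‖ ≤ c) (x : ℤ_[p]) :
    ‖(F.trunc n).eval x - (F.trunc m).eval x‖ ≤ c := by
  induction n with
  | zero =>
    obtain rfl : m = 0 := Nat.le_zero.mp hmn
    simpa using hc
  | succ k ih =>
    rcases eq_or_lt_of_le hmn with rfl | hlt
    · simpa using hc
    have hmk : m ≤ k := Nat.lt_succ_iff.mp hlt
    rw [PowerSeries.trunc_succ, eval_add, eval_monomial]
    have hre : (F.trunc k).eval x + PowerSeries.coeff (R := ℤ_[p]) k F * x ^ k -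
        (F.trunc m).eval x =
        ((F.trunc k).eval x - (F.trunc m).eval x) + PowerSeries.coeff (R := ℤ_[p]) k F * x ^ k := by
      ring
    rw [hre]
    refine le_trans (IsUltrametricDist.norm_add_le_max _ _) (max_le (ih hmk) ?_)
    calc ‖PowerSeries.coeff (R := ℤ_[p]) k F * x ^ k‖ ≤ ‖PowerSeries.coeff (R := ℤ_[p]) k F‖ := by
          rw [norm_mul]
          exact mul_le_of_le_one_right (norm_nonneg _) (PadicInt.norm_le_one _)
      _ ≤ c := h _ hmk

end Stmt5Aux

section KeyLift

open Stmt5Aux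

/-- Core construction: a single residue lifts to a root of the power series. -/
theorem key_lift (p N : ℕ) [Fact p.Prime] (hN : 0 < N)
    (F : PowerSeries ℤ_[p])
    (hconv : Tendsto (fun n => ‖PowerSeries.coeff (R := ℤ_[p]) n F‖) atTop (nhds 0))
    (M : ℕ)
    (hcong : ∀ i : ℕ, M < i → (p : ℤ_[p]) ^ N ∣ PowerSeries.coeff (R := ℤ_[p]) i F)
    (r : ℤ_[p])
    (hroot : (p : ℤ_[p]) ^ N ∣ (F.trunc (M + 1)).eval r)
    (hder : ¬ (p : ℤ_[p]) ^ N ∣ ((F.trunc (M + 1)).derivative.eval r) ^ 2) :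
    ∃ z : ℤ_[p], evalPS p F z = 0 ∧ evalPS p (derivPS p F) z ≠ 0 ∧
      ‖r - z‖ ≤ (p : ℝ) ^ (-(N : ℤ)) / ‖(F.trunc (M + 1)).derivative.eval r‖ ∧
      ‖r - z‖ < ‖(F.trunc (M + 1)).derivative.eval r‖ := by
  classical
  set D : ℤ_[p] := (F.trunc (M + 1)).derivative.eval r with hDdef
  have hppos : (0 : ℝ) < (p : ℝ) ^ (-(N : ℤ)) := by
    have : (0 : ℝ) < p := by exact_mod_cast (Fact.out : p.Prime).pos
    positivity
  have hD2 : (p : ℝ) ^ (-(N : ℤ)) < ‖D‖ ^ 2 := by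
    have h := hder
    rw [dvd_iff_norm_le, norm_pow] at h
    exact not_le.mp h
  have hDpos : 0 < ‖D‖ := by
    rcases (norm_nonneg D).lt_or_eq with h | h
    · exact h
    · exfalso
      rw [← h] at hD2
      simp only [zero_pow, ne_eq, OfNat.ofNat_ne_zero, not_false_eq_true] at hD2
      linarith
  have hD1 : ‖D‖ ≤ 1 := PadicInt.norm_le_one D
  have hND : (p : ℝ) ^ (-(N : ℤ)) < ‖D‖ := by nlinarith
  -- divisibility facts about truncations
  have h1 : ∀ m : ℕ, ∀ x : ℤ_[p],
      (p : ℤ_[p]) ^ N ∣ (F.trunc (M + 1 + m)).eval x - (F.trunc (M + 1)).eval x := by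
    intro m x
    induction m with
    | zero => simp
    | succ k ih =>
      have hqs : F.trunc (M + 1 + (k + 1)) = F.trunc (M + 1 + k)
          + Polynomial.monomial (M + 1 + k) (PowerSeries.coeff (R := ℤ_[p]) (M + 1 + k) F) :=
        PowerSeries.trunc_succ F (M + 1 + k)
      rw [hqs, eval_add, eval_monomial]
      have hre : (F.trunc (M + 1 + k)).eval x
            + PowerSeries.coeff (R := ℤ_[p]) (M + 1 + k) F * x ^ (M + 1 + k)
            - (F.trunc (M + 1)).eval x
          = ((F.trunc (M + 1 + k)).eval x - (F.trunc (M + 1)).eval x)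
            + PowerSeries.coeff (R := ℤ_[p]) (M + 1 + k) F * x ^ (M + 1 + k) := by ring
      rw [hre]
      exact dvd_add ih ((hcong _ (by omega)).mul_right _)
  have h2 : ∀ m : ℕ, ∀ x : ℤ_[p],
      (p : ℤ_[p]) ^ N ∣ (F.trunc (M + 1 + m)).derivative.eval x
        - (F.trunc (M + 1)).derivative.eval x := by
    intro m x
    induction m with
    | zero => simp
    | succ k ih =>
      have hqs : F.trunc (M + 1 + (k + 1)) = F.trunc (M + 1 + k)
          + Polynomial.monomial (M + 1 + k) (PowerSeries.coeff (R := ℤ_[p]) (M + 1 + k) F) :=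
        PowerSeries.trunc_succ F (M + 1 + k)
      rw [hqs, derivative_add, derivative_monomial, eval_add, eval_monomial]
      have hre : (F.trunc (M + 1 + k)).derivative.eval x
            + PowerSeries.coeff (R := ℤ_[p]) (M + 1 + k) F * (M + 1 + k : ℕ) * x ^ (M + 1 + k - 1)
            - (F.trunc (M + 1)).derivative.eval x
          = ((F.trunc (M + 1 + k)).derivative.eval x - (F.trunc (M + 1)).derivative.eval x)
            + PowerSeries.coeff (R := ℤ_[p]) (M + 1 + k) F * (M + 1 + k : ℕ) * x ^ (M + 1 + k - 1) := by
        ring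
      rw [hre]
      exact dvd_add ih (((hcong _ (by omega)).mul_right _).mul_right _)
  have hQr : ∀ m : ℕ, ‖(F.trunc (M + 1 + m)).eval r‖ ≤ (p : ℝ) ^ (-(N : ℤ)) := by
    intro m
    refine (dvd_iff_norm_le N _).mp ?_
    have := dvd_add (h1 m r) hroot
    rwa [sub_add_cancel] at this
  have hQ'r : ∀ m : ℕ, ‖(F.trunc (M + 1 + m)).derivative.eval r‖ = ‖D‖ := by
    intro m
    have h := (dvd_iff_norm_le N _).mp (h2 m r)
    have e : (F.trunc (M + 1 + m)).derivative.eval r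
        = D + ((F.trunc (M + 1 + m)).derivative.eval r - D) := by ring
    rw [e, norm_add_eq_left (lt_of_le_of_lt h hND)]
  -- Hensel's lemma applied to each truncation
  have hensel : ∀ m : ℕ, ∃ w : ℤ_[p], (F.trunc (M + 1 + m)).eval w = 0 ∧ ‖w - r‖ < ‖D‖ ∧
      ‖(F.trunc (M + 1 + m)).derivative.eval w‖ = ‖D‖ := by
    intro m
    have hnorm : ‖(F.trunc (M + 1 + m)).eval r‖
        < ‖(F.trunc (M + 1 + m)).derivative.eval r‖ ^ 2 := by
      rw [hQ'r m]
      exact lt_of_le_of_lt (hQr m) hD2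
    obtain ⟨w, hw0, hw1, hw2, -⟩ := hensels_lemma hnorm
    simp only [Polynomial.coe_aeval_eq_eval] at hw0 hw1 hw2
    exact ⟨w, hw0, by rwa [hQ'r m] at hw1, by rw [hw2, hQ'r m]⟩
  choose z hz0 hz1 hz2 using hensel
  have hrzD : ∀ m, ‖r - z m‖ < ‖D‖ := fun m => by rw [norm_sub_rev]; exact hz1 m
  have hzr : ∀ m, ‖r - z m‖ ≤ (p : ℝ) ^ (-(N : ℤ)) / ‖D‖ := by
    intro m
    have hlt : ‖r - z m‖ < ‖(F.trunc (M + 1 + m)).derivative.eval (z m)‖ := by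
      rw [hz2 m]
      exact hrzD m
    have hq := newton_quant _ (hz0 m) hlt
    rw [hz2 m] at hq
    rw [le_div_iff₀ hDpos]
    calc ‖r - z m‖ * ‖D‖ = ‖D‖ * ‖r - z m‖ := mul_comm _ _
      _ = ‖(F.trunc (M + 1 + m)).eval r‖ := hq.symm
      _ ≤ _ := hQr m
  -- the approximate roots form a Cauchy sequence
  have hcauchy : CauchySeq z := by
    rw [Metric.cauchySeq_iff]
    intro ε hε
    have hev : ∀ᶠ i in atTop, ‖PowerSeries.coeff (R := ℤ_[p]) i F‖ < ε * ‖D‖ / 2 :=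
      hconv.eventually (gt_mem_nhds (by positivity))
    obtain ⟨K, hK⟩ := eventually_atTop.mp hev
    have hmain : ∀ m n : ℕ, K ≤ m → m ≤ n → ‖z n - z m‖ ≤ ε / 2 := by
      intro m n hKm hmn
      have hlt : ‖z n - z m‖ < ‖(F.trunc (M + 1 + m)).derivative.eval (z m)‖ := by
        rw [hz2 m]
        have hre : z n - z m = (z n - r) + (r - z m) := by ring
        rw [hre]
        exact lt_of_le_of_lt (IsUltrametricDist.norm_add_le_max _ _)
          (max_lt (hz1 n) (hrzD m))
      have hq := newton_quant _ (hz0 m) hlt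
      rw [hz2 m] at hq
      have hdiff : ‖(F.trunc (M + 1 + n)).eval (z n) - (F.trunc (M + 1 + m)).eval (z n)‖
          ≤ ε * ‖D‖ / 2 := by
        refine trunc_diff_norm_le (by positivity) _ (by omega) (fun i hi => ?_) (z n)
        exact (hK i (by omega)).le
      rw [hz0 n, zero_sub, norm_neg, hq] at hdiff
      have hfin : ‖z n - z m‖ * ‖D‖ ≤ ε / 2 * ‖D‖ := by nlinarith
      exact le_of_mul_le_mul_right hfin hDpos
    refine ⟨K, fun n hn m hm => ?_⟩
    rw [dist_eq_norm]
    rcases le_total m n with h | h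
    · exact lt_of_le_of_lt (hmain m n hm h) (by linarith)
    · rw [norm_sub_rev]
      exact lt_of_le_of_lt (hmain n m hn h) (by linarith)
  obtain ⟨zz, hzz⟩ := cauchySeq_tendsto_of_complete hcauchy
  -- limit facts
  have hzrz : ‖r - zz‖ ≤ (p : ℝ) ^ (-(N : ℤ)) / ‖D‖ := by
    have ht : Tendsto (fun m => ‖r - z m‖) atTop (nhds ‖r - zz‖) :=
      (tendsto_const_nhds.sub hzz).norm
    exact le_of_tendsto ht (Eventually.of_forall hzr)
  have hdivlt : (p : ℝ) ^ (-(N : ℤ)) / ‖D‖ < ‖D‖ := by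
    rw [div_lt_iff₀ hDpos]
    nlinarith
  have hrzlt : ‖r - zz‖ < ‖D‖ := lt_of_le_of_lt hzrz hdivlt
  -- the limit is a root of F
  have hFz : evalPS p F zz = 0 := by
    have hnorm0 : ∀ ε : ℝ, 0 < ε → ‖evalPS p F zz‖ ≤ ε := by
      intro ε hε
      obtain ⟨K₁, hK₁⟩ := eventually_atTop.mp (hconv.eventually (gt_mem_nhds hε))
      obtain ⟨K₂, hK₂⟩ := Metric.tendsto_atTop.mp hzz (min ε ‖D‖) (lt_min hε hDpos)
      set m := max K₁ K₂ with hm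
      have hm2 : ‖z m - zz‖ < min ε ‖D‖ := by
        have := hK₂ m (le_max_right _ _)
        rwa [dist_eq_norm] at this
      have e1 : ‖evalPS p F zz - (F.trunc (M + 1 + m)).eval zz‖ ≤ ε := by
        refine evalPS_sub_trunc hconv _ _ hε.le (fun i hi => ?_)
        refine (hK₁ i ?_).le
        have : K₁ ≤ m := le_max_left _ _
        omega
      have hlt : ‖zz - z m‖ < ‖(F.trunc (M + 1 + m)).derivative.eval (z m)‖ := by
        rw [hz2 m, norm_sub_rev]
        exact lt_of_lt_of_le hm2 (min_le_right _ _)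
      have e2 : ‖(F.trunc (M + 1 + m)).eval zz‖ ≤ ε := by
        rw [newton_quant _ (hz0 m) hlt, hz2 m]
        have hle : ‖zz - z m‖ ≤ ε := by
          rw [norm_sub_rev]
          exact (lt_of_lt_of_le hm2 (min_le_left _ _)).le
        calc ‖D‖ * ‖zz - z m‖ ≤ 1 * ε :=
              mul_le_mul hD1 hle (norm_nonneg _) zero_le_one
          _ = ε := one_mul ε
      have hre : evalPS p F zz = (evalPS p F zz - (F.trunc (M + 1 + m)).eval zz)
          + (F.trunc (M + 1 + m)).eval zz := by ring
      rw [hre]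
      exact le_trans (IsUltrametricDist.norm_add_le_max _ _) (max_le e1 e2)
    have hle0 : ‖evalPS p F zz‖ ≤ 0 := by
      by_contra h
      push_neg at h
      have := hnorm0 (‖evalPS p F zz‖ / 2) (by linarith)
      linarith
    exact norm_le_zero_iff.mp hle0
  -- the limit is a simple root
  have hGconv := derivPS_conv (p := p) hconv
  have htr : (F.trunc (M + 1)).derivative = PowerSeries.trunc M (derivPS p F) :=
    trunc_derivative F M
  have e1 : ‖evalPS p (derivPS p F) zz - ((derivPS p F).trunc M).eval zz‖
      ≤ (p : ℝ) ^ (-(N : ℤ)) := by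
    refine evalPS_sub_trunc hGconv _ _ hppos.le (fun i hi => ?_)
    refine (dvd_iff_norm_le N _).mp ?_
    have hco : PowerSeries.coeff (R := ℤ_[p]) i (derivPS p F)
        = (i + 1 : ℤ_[p]) * PowerSeries.coeff (R := ℤ_[p]) (i + 1) F := by
      simp [derivPS, PowerSeries.coeff_mk]
    rw [hco]
    exact (hcong (i + 1) (by omega)).mul_left _
  have e2 : ‖((derivPS p F).trunc M).eval zz - D‖ < ‖D‖ := by
    have hdd : (zz - r) ∣ (((derivPS p F).trunc M).eval zz - ((derivPS p F).trunc M).eval r) :=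
      Polynomial.sub_dvd_eval_sub _ _ _
    have hb : ‖((derivPS p F).trunc M).eval zz - ((derivPS p F).trunc M).eval r‖ ≤ ‖zz - r‖ :=
      norm_le_of_dvd hdd
    have hDr : ((derivPS p F).trunc M).eval r = D := by rw [hDdef, htr]
    conv_lhs => rw [← hDr]
    refine lt_of_le_of_lt hb ?_
    rw [norm_sub_rev]
    exact hrzlt
  have hGz : ‖evalPS p (derivPS p F) zz‖ = ‖D‖ := by
    have hre : evalPS p (derivPS p F) zz
        = D + ((evalPS p (derivPS p F) zz - ((derivPS p F).trunc M).eval zz)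
          + (((derivPS p F).trunc M).eval zz - D)) := by ring
    rw [hre, norm_add_eq_left]
    exact lt_of_le_of_lt (IsUltrametricDist.norm_add_le_max _ _)
      (max_lt (lt_of_le_of_lt e1 hND) e2)
  have hGne : evalPS p (derivPS p F) zz ≠ 0 := by
    intro h
    rw [h, norm_zero] at hGz
    exact absurd hGz.symm hDpos.ne'
  exact ⟨zz, hFz, hGne, hzrz, hrzlt⟩

end KeyLift

/-- A system of roots of the truncation `F_M` modulo `p^N` lifts to pairwise
distinct simple roots of `F` in `ℤ_p`, one for each residue `r ∈ R`. -/
theorem stmt5 (p N : ℕ) [Fact p.Prime] (hN : 0 < N)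
    (F : PowerSeries ℤ_[p])
    (hconv : Filter.Tendsto (fun n => ‖PowerSeries.coeff (R := ℤ_[p]) n F‖)
      Filter.atTop (nhds 0))
    (M : ℕ)
    (hcong : ∀ i : ℕ, M < i → (p : ℤ_[p]) ^ N ∣ PowerSeries.coeff (R := ℤ_[p]) i F)
    (R : Finset ℤ_[p])
    (hroot : ∀ r ∈ R, (p : ℤ_[p]) ^ N ∣ (F.trunc (M + 1)).eval r)
    (hder : ∀ r ∈ R, ¬ (p : ℤ_[p]) ^ N ∣ ((F.trunc (M + 1)).derivative.eval r) ^ 2)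
    (hsep : ∀ r ∈ R, ∀ r' ∈ R, r ≠ r' →
      ¬ (p : ℤ_[p]) ^ (((N : ℤ) - ((F.trunc (M + 1)).derivative.eval r).valuation).toNat)
        ∣ (r - r')) :
    ∃ lift : ℤ_[p] → ℤ_[p],
      (∀ r ∈ R,
        evalPS p F (lift r) = 0 ∧
        evalPS p (derivPS p F) (lift r) ≠ 0 ∧
        ‖r - lift r‖ < ‖(F.trunc (M + 1)).derivative.eval r‖) ∧
      (∀ r ∈ R, ∀ r' ∈ R, r ≠ r' → lift r ≠ lift r') := by
  classical
  have hkey : ∀ r : ℤ_[p], ∃ z : ℤ_[p], r ∈ R →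
      (evalPS p F z = 0 ∧ evalPS p (derivPS p F) z ≠ 0 ∧
       ‖r - z‖ ≤ (p : ℝ) ^ (-(N : ℤ)) / ‖(F.trunc (M + 1)).derivative.eval r‖ ∧
       ‖r - z‖ < ‖(F.trunc (M + 1)).derivative.eval r‖) := by
    intro r
    by_cases hr : r ∈ R
    · obtain ⟨z, h⟩ := key_lift p N hN F hconv M hcong r (hroot r hr) (hder r hr)
      exact ⟨z, fun _ => h⟩
    · exact ⟨r, fun h => absurd h hr⟩
  choose lift hlift using hkey
  have hprime : (1 : ℝ) < p := by exact_mod_cast (Fact.out : p.Prime).one_lt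
  have hp0 : (p : ℝ) ≠ 0 := by positivity
  -- the quantitative divisibility bound on the lifts
  have hdvd : ∀ s ∈ R, (p : ℤ_[p]) ^
      (((N : ℤ) - ((F.trunc (M + 1)).derivative.eval s).valuation).toNat) ∣ (s - lift s) := by
    intro s hs
    set Ds : ℤ_[p] := (F.trunc (M + 1)).derivative.eval s with hDs
    have hne0 : Ds ≠ 0 := by
      intro h
      apply hder s hs
      rw [← hDs, h]
      simp
    have hD2 : (p : ℝ) ^ (-(N : ℤ)) < ‖Ds‖ ^ 2 := by
      have h := hder s hs
      rw [← hDs, Stmt5Aux.dvd_iff_norm_le, norm_pow] at h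
      exact not_le.mp h
    have hval : ‖Ds‖ = (p : ℝ) ^ (-(Ds.valuation : ℤ)) := PadicInt.norm_eq_zpow_neg_valuation hne0
    have hv0 : 0 ≤ (Ds.valuation : ℤ) := Int.natCast_nonneg _
    have h2v : 2 * Ds.valuation < (N : ℤ) := by
      rw [hval, sq, ← zpow_add₀ hp0] at hD2
      have := (zpow_lt_zpow_iff_right₀ hprime).mp hD2
      omega
    refine (Stmt5Aux.dvd_iff_norm_le _ _).mpr ?_
    calc ‖s - lift s‖ ≤ (p : ℝ) ^ (-(N : ℤ)) / ‖Ds‖ := (hlift s hs).2.2.1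
      _ = (p : ℝ) ^ (-(((N : ℤ) - Ds.valuation).toNat : ℤ)) := by
          rw [hval, ← zpow_sub₀ hp0]
          congr 1
          omega
  refine ⟨lift, fun r hr => ⟨(hlift r hr).1, (hlift r hr).2.1, (hlift r hr).2.2.2⟩, ?_⟩
  intro r hr r' hr' hne heq
  rcases le_total (((N : ℤ) - ((F.trunc (M + 1)).derivative.eval r).valuation).toNat)
      (((N : ℤ) - ((F.trunc (M + 1)).derivative.eval r').valuation).toNat) with h | h
  · apply hsep r hr r' hr' hne
    have d1 := hdvd r hr
    have d2 := (pow_dvd_pow (p : ℤ_[p]) h).trans (hdvd r' hr')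
    have hre : r - r' = (r - lift r) - (r' - lift r') := by rw [heq]; ring
    rw [hre]
    exact dvd_sub d1 d2
  · apply hsep r' hr' r hr hne.symm
    have d1 := hdvd r' hr'
    have d2 := (pow_dvd_pow (p : ℤ_[p]) h).trans (hdvd r hr)
    have hre : r' - r = (r' - lift r') - (r - lift r) := by rw [heq]; ring
    rw [hre]
    exact dvd_sub d1 d2
end

section
/- Let p be a prime, N ≥ 1, F ∈ ℤ_p[x] with F ≡ F_M (mod p^N). If r̃ ∈ ℤ_p is any root of F with 2·v_p(F'(r̃)) < N, then the reduction of r̃ modulo p^N is a root of F_M modulo p^N satisfying the Hensel condition F_M'(r̃)² ≢ 0 (mod p^N). In particular every such root of F reduces to an element of a system of roots of F_M modulo p^N. -/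
lemma dvd_eval_of_dvd_coeff {R : Type*} [CommRing R] (c : R) (G : Polynomial R)
    (h : ∀ i, c ∣ G.coeff i) (x : R) : c ∣ G.eval x := by
  rw [Polynomial.eval_eq_sum_range]
  exact Finset.dvd_sum fun i _ => (h i).mul_right _

/-- Conversely, every root `r̃ ∈ ℤ_p` of `F` with `2 v_p(F'(r̃)) < N` reduces
modulo `p^N` to a root of the truncation `F_M` satisfying the Hensel condition
`F_M'(r̃)² ≢ 0 (mod p^N)`. -/
theorem stmt6 (p N : ℕ) [Fact p.Prime] (hN : 1 ≤ N)
    (F FM : Polynomial ℤ_[p])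
    (hcong : ∀ i : ℕ, (p : ℤ_[p]) ^ N ∣ (F - FM).coeff i)
    (rt : ℤ_[p]) (hrt : F.eval rt = 0)
    (hder0 : F.derivative.eval rt ≠ 0)
    (hder : 2 * (F.derivative.eval rt).valuation < (N : ℤ)) :
    (p : ℤ_[p]) ^ N ∣ FM.eval rt ∧
      ¬ (p : ℤ_[p]) ^ N ∣ (FM.derivative.eval rt) ^ 2 := by
  have hp1 : (1 : ℝ) < p := by exact_mod_cast (Fact.out : p.Prime).one_lt
  have dvd_iff : ∀ x : ℤ_[p], (p : ℤ_[p]) ^ N ∣ x ↔ ‖x‖ ≤ (p : ℝ) ^ (-(N:ℤ)) := by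
    intro x
    rw [← Ideal.mem_span_singleton, ← PadicInt.norm_le_pow_iff_mem_span_pow]
  have h1 : (p : ℤ_[p]) ^ N ∣ (F - FM).eval rt :=
    dvd_eval_of_dvd_coeff _ _ hcong rt
  constructor
  · have : FM.eval rt = -((F - FM).eval rt) := by
      simp [hrt]
    rw [this]
    exact h1.neg_right
  · have hder_coeff : ∀ i, (p : ℤ_[p]) ^ N ∣ (Polynomial.derivative (F - FM)).coeff i := by
      intro i
      rw [Polynomial.coeff_derivative]
      exact (hcong (i+1)).mul_right _
    have h2 : (p : ℤ_[p]) ^ N ∣ (Polynomial.derivative (F - FM)).eval rt :=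
      dvd_eval_of_dvd_coeff _ _ hder_coeff rt
    set a := F.derivative.eval rt with ha
    set d := (Polynomial.derivative (F - FM)).eval rt with hd
    have hbd : FM.derivative.eval rt = a - d := by
      simp [ha, hd, Polynomial.derivative_sub]
    have hna : ‖a‖ = (p : ℝ) ^ (-(a.valuation : ℤ)) := PadicInt.norm_eq_zpow_neg_valuation hder0
    have hvN : a.valuation < N := by
      have h0 : 0 ≤ a.valuation := Nat.zero_le _
      omega
    have hnd : ‖d‖ ≤ (p : ℝ) ^ (-(N:ℤ)) := (dvd_iff d).mp h2
    have hdlt : ‖d‖ < ‖a‖ := by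
      rw [hna]
      exact lt_of_le_of_lt hnd (by
        apply zpow_lt_zpow_right₀ hp1
        omega)
    have hnb : ‖FM.derivative.eval rt‖ = ‖a‖ := by
      rw [hbd]
      rw [sub_eq_add_neg, PadicInt.norm_add_eq_max_of_ne (by simpa using hdlt.ne'), norm_neg]
      exact max_eq_left hdlt.le
    intro hdvd
    rw [dvd_iff] at hdvd
    rw [norm_pow, hnb, hna, ← zpow_natCast, ← zpow_mul] at hdvd
    have := (zpow_le_zpow_iff_right₀ hp1).mp hdvd
    omega
end
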